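/- Let Z ~ N(0,1), let σ: ℝ → [0,1] be measurable, and define f_δ(t) = E[log(2/(1 + e^{−t·σ(Z)}))] + E[log(2/(1 + e^{t·σ(Z+δ)}))]. Then f_δ(0) = 0, f_δ'(0) = (1/2)(E σ(Z) − E σ(Z+δ)), and f_δ''(t) ≥ −1/2 for all t. -/

import Mathlib

open MeasureTheory ProbabilityTheory Real

/-!
Writing `log (2 / (1 + e^{-a})) = log (2 · sigmoid a)`, both summands of `f_δ` are integrals of
`t ↦ log (2 · sigmoid (t x))` with `x = σ(Z)` and `x = -σ(Z + δ)` respectively. Its first two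
`t`-derivatives are `x · sigmoid (-t x)` and `-x² · p (1 - p)` with `p = sigmoid (-t x)`, bounded
by `|x|` and `x² / 4`, so dominated convergence differentiates under the integral twice, and
`p (1 - p) ≤ 1/4` gives the lower bound.
-/

theorem hasDerivAt_integral_of_forall_hasDerivAt {α E : Type*} [MeasurableSpace α]
    [NormedAddCommGroup E] [NormedSpace ℝ E] {μ : Measure α} [IsFiniteMeasure μ]
    {F F' : ℝ → α → E} {C t : ℝ} (hF_meas : ∀ s, AEStronglyMeasurable (F s) μ)
    (hF_int : Integrable (F t) μ) (hF'_meas : AEStronglyMeasurable (F' t) μ)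
    (h_bound : ∀ s a, ‖F' s a‖ ≤ C) (h_diff : ∀ s a, HasDerivAt (F · a) (F' s a) s) :
    HasDerivAt (fun s => ∫ a, F s a ∂μ) (∫ a, F' t a ∂μ) t :=
  (hasDerivAt_integral_of_dominated_loc_of_deriv_le Filter.univ_mem
    (Filter.Eventually.of_forall hF_meas) hF_int hF'_meas
    (ae_of_all _ fun a s _ => h_bound s a) (integrable_const C)
    (ae_of_all _ fun a s _ => h_diff s a)).2

theorem hasDerivAt_log_two_mul_sigmoid (x t : ℝ) :
    HasDerivAt (fun s => log (2 * sigmoid (s * x))) (x * sigmoid (-(t * x))) t := by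
  have hs : HasDerivAt (fun s => log (2 * sigmoid (s * x))) _ t :=
    (((hasDerivAt_sigmoid (t * x)).comp t (hasDerivAt_mul_const x)).const_mul 2).log
      (mul_pos two_pos (sigmoid_pos (t * x))).ne'
  convert hs using 1
  rw [Function.comp_apply, sigmoid_neg]
  have hpos := sigmoid_pos (t * x)
  generalize sigmoid (t * x) = p at hpos ⊢
  field_simp

theorem hasDerivAt_mul_sigmoid_neg (x t : ℝ) :
    HasDerivAt (fun s => x * sigmoid (-(s * x)))
      (-(x ^ 2 * (sigmoid (-(t * x)) * (1 - sigmoid (-(t * x)))))) t := by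
  have hs : HasDerivAt (fun s => x * sigmoid (-(s * x))) _ t :=
    ((hasDerivAt_sigmoid _).comp t (hasDerivAt_mul_const x).neg).const_mul x
  convert hs using 1
  simp only [Pi.neg_apply]
  ring

theorem abs_mul_sigmoid_le (x u : ℝ) : |x * sigmoid u| ≤ |x| := by
  rw [abs_mul, abs_of_pos (sigmoid_pos u)]
  exact mul_le_of_le_one_right (abs_nonneg x) (sigmoid_le_one u)

theorem abs_log_two_mul_sigmoid_le (x t : ℝ) : |log (2 * sigmoid (t * x))| ≤ |x| * |t| := by
  have h := convex_univ.norm_image_sub_le_of_norm_hasDerivWithin_le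
    (fun s _ => (hasDerivAt_log_two_mul_sigmoid x s).hasDerivWithinAt)
    (fun s _ => abs_mul_sigmoid_le x _) (Set.mem_univ 0) (Set.mem_univ t)
  simpa [sigmoid_zero] using h

theorem sigmoid_mul_one_sub_sigmoid_nonneg (u : ℝ) : 0 ≤ sigmoid u * (1 - sigmoid u) :=
  mul_nonneg (sigmoid_nonneg u) (sub_nonneg.2 (sigmoid_le_one u))

theorem sigmoid_mul_one_sub_sigmoid_le (u : ℝ) : sigmoid u * (1 - sigmoid u) ≤ 1 / 4 := by
  nlinarith [sq_nonneg (sigmoid u - 1 / 2)]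

theorem sq_mul_sigmoid_mul_one_sub_sigmoid_le {x C : ℝ} (hx : |x| ≤ C) (u : ℝ) :
    x ^ 2 * (sigmoid u * (1 - sigmoid u)) ≤ C ^ 2 / 4 := by
  have hx2 : x ^ 2 ≤ C ^ 2 := sq_abs x ▸ pow_le_pow_left₀ (abs_nonneg x) hx 2
  nlinarith [sigmoid_mul_one_sub_sigmoid_nonneg u, sigmoid_mul_one_sub_sigmoid_le u, sq_nonneg x]

theorem abs_neg_sq_mul_sigmoid_mul_one_sub_sigmoid_le {x C : ℝ} (hx : |x| ≤ C) (u : ℝ) :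
    |-(x ^ 2 * (sigmoid u * (1 - sigmoid u)))| ≤ C ^ 2 / 4 := by
  rw [abs_neg, abs_of_nonneg (mul_nonneg (sq_nonneg x) (sigmoid_mul_one_sub_sigmoid_nonneg u))]
  exact sq_mul_sigmoid_mul_one_sub_sigmoid_le hx u

section Integral

variable {α : Type*} [MeasurableSpace α] {μ : Measure α} {ψ : α → ℝ} {C : ℝ}

theorem hasDerivAt_integral_log_two_mul_sigmoid [IsFiniteMeasure μ] (hψ : Measurable ψ)
    (hC : ∀ z, |ψ z| ≤ C) (t : ℝ) :
    HasDerivAt (fun s => ∫ z, log (2 * sigmoid (s * ψ z)) ∂μ)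
      (∫ z, ψ z * sigmoid (-(t * ψ z)) ∂μ) t :=
  hasDerivAt_integral_of_forall_hasDerivAt
    (fun _ => Measurable.aestronglyMeasurable (by fun_prop))
    (Integrable.of_bound (Measurable.aestronglyMeasurable (by fun_prop)) (C * |t|)
      (ae_of_all _ fun z => (abs_log_two_mul_sigmoid_le _ t).trans
        (mul_le_mul_of_nonneg_right (hC z) (abs_nonneg t))))
    (Measurable.aestronglyMeasurable (by fun_prop))
    (fun _ z => (abs_mul_sigmoid_le _ _).trans (hC z))
    (fun s z => hasDerivAt_log_two_mul_sigmoid (ψ z) s)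

theorem hasDerivAt_integral_mul_sigmoid_neg [IsFiniteMeasure μ] (hψ : Measurable ψ)
    (hC : ∀ z, |ψ z| ≤ C) (t : ℝ) :
    HasDerivAt (fun s => ∫ z, ψ z * sigmoid (-(s * ψ z)) ∂μ)
      (∫ z, -(ψ z ^ 2 * (sigmoid (-(t * ψ z)) * (1 - sigmoid (-(t * ψ z))))) ∂μ) t :=
  hasDerivAt_integral_of_forall_hasDerivAt
    (fun _ => Measurable.aestronglyMeasurable (by fun_prop))
    (Integrable.of_bound (Measurable.aestronglyMeasurable (by fun_prop)) C
      (ae_of_all _ fun z => (abs_mul_sigmoid_le _ _).trans (hC z)))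
    (Measurable.aestronglyMeasurable (by fun_prop))
    (fun _ z => abs_neg_sq_mul_sigmoid_mul_one_sub_sigmoid_le (hC z) _)
    (fun s z => hasDerivAt_mul_sigmoid_neg (ψ z) s)

theorem neg_sq_div_four_le_integral_neg_sq_mul_sigmoid [IsProbabilityMeasure μ]
    (hψ : Measurable ψ) (hC : ∀ z, |ψ z| ≤ C) (t : ℝ) :
    -(C ^ 2 / 4) ≤
      ∫ z, -(ψ z ^ 2 * (sigmoid (-(t * ψ z)) * (1 - sigmoid (-(t * ψ z))))) ∂μ := by
  calc -(C ^ 2 / 4) = ∫ _, -(C ^ 2 / 4) ∂μ := by simp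
    _ ≤ _ := integral_mono (integrable_const _)
      (Integrable.of_bound (Measurable.aestronglyMeasurable (by fun_prop)) (C ^ 2 / 4)
        (ae_of_all _ fun z => abs_neg_sq_mul_sigmoid_mul_one_sub_sigmoid_le (hC z) _))
      (fun z => neg_le_neg (sq_mul_sigmoid_mul_one_sub_sigmoid_le (hC z) _))

end Integral

/-- For `Z ~ N(0,1)` and `σ : ℝ → [0,1]`, the function
`f_δ(t) = E log(2/(1+e^{−tσ(Z)})) + E log(2/(1+e^{tσ(Z+δ)}))` satisfies
`f_δ(0) = 0`, `f_δ'(0) = (1/2)(Eσ(Z) − Eσ(Z+δ))` and `f_δ'' ≥ −1/2`. -/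
theorem f_delta_properties
    (σ : ℝ → ℝ) (hσm : Measurable σ) (hσ : ∀ z, σ z ∈ Set.Icc (0 : ℝ) 1) (δ : ℝ) :
    (fun t : ℝ =>
        (∫ z, Real.log (2 / (1 + Real.exp (-t * σ z))) ∂(gaussianReal 0 1)) +
        (∫ z, Real.log (2 / (1 + Real.exp (t * σ (z + δ)))) ∂(gaussianReal 0 1))) 0 = 0 ∧
    HasDerivAt
      (fun t : ℝ =>
        (∫ z, Real.log (2 / (1 + Real.exp (-t * σ z))) ∂(gaussianReal 0 1)) +
        (∫ z, Real.log (2 / (1 + Real.exp (t * σ (z + δ)))) ∂(gaussianReal 0 1)))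
      ((1 / 2) * ((∫ z, σ z ∂(gaussianReal 0 1)) - (∫ z, σ (z + δ) ∂(gaussianReal 0 1)))) 0 ∧
    ∀ t : ℝ, -(1 / 2) ≤
      deriv (deriv (fun t : ℝ =>
        (∫ z, Real.log (2 / (1 + Real.exp (-t * σ z))) ∂(gaussianReal 0 1)) +
        (∫ z, Real.log (2 / (1 + Real.exp (t * σ (z + δ)))) ∂(gaussianReal 0 1)))) t := by
  set μ := gaussianReal 0 1
  have hσ₁ : ∀ z, |σ z| ≤ 1 := fun z => abs_le.2 ⟨by linarith [(hσ z).1], (hσ z).2⟩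
  have hσδ : Measurable fun z => -σ (z + δ) := by fun_prop
  have hσδ₁ : ∀ z, |-σ (z + δ)| ≤ 1 := fun z => (abs_neg _).trans_le (hσ₁ (z + δ))
  have hf : (fun t : ℝ => (∫ z, log (2 / (1 + exp (-t * σ z))) ∂μ) +
        ∫ z, log (2 / (1 + exp (t * σ (z + δ)))) ∂μ) =
      fun t => (∫ z, log (2 * sigmoid (t * σ z)) ∂μ) +
        ∫ z, log (2 * sigmoid (t * -σ (z + δ))) ∂μ := by
    simp only [sigmoid_def, neg_mul, mul_neg, neg_neg, div_eq_mul_inv]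
  have hf' := fun t => (hasDerivAt_integral_log_two_mul_sigmoid (μ := μ) hσm hσ₁ t).fun_add
    (hasDerivAt_integral_log_two_mul_sigmoid (μ := μ) hσδ hσδ₁ t)
  rw [hf]
  refine ⟨by simp [sigmoid_zero], ?_, fun t => ?_⟩
  · refine (hf' 0).congr_deriv ?_
    simp only [zero_mul, neg_zero, sigmoid_zero, integral_mul_const, mul_neg, neg_mul, integral_neg,
      one_div]
    ring
  · rw [funext fun s => (hf' s).deriv,
      ((hasDerivAt_integral_mul_sigmoid_neg hσm hσ₁ t).fun_add
        (hasDerivAt_integral_mul_sigmoid_neg hσδ hσδ₁ t)).deriv]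
    linarith [neg_sq_div_four_le_integral_neg_sq_mul_sigmoid (μ := μ) hσm hσ₁ t,
      neg_sq_div_four_le_integral_neg_sq_mul_sigmoid (μ := μ) hσδ hσδ₁ t]
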